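/- For all n ≥ 0, F(2n+4; 0, n) = (2n+2)!/(n!·(n+3)!) · (8n² + 32n + 33), where F counts Gessel walks of length 2n+4 from the origin to (0, n). -/

import Mathlib

open Finset

/-- The four Gessel steps: W, E, NE, SW. -/
def gstep : Fin 4 → ℤ × ℤ
  | 0 => (-1, 0)
  | 1 => (1, 0)
  | 2 => (1, 1)
  | 3 => (-1, -1)

/-- Position of the walk `w` after `j` steps. -/
def wpos (m : ℕ) (w : Fin m → Fin 4) (j : ℕ) : ℤ × ℤ :=
  ∑ i : Fin m, if (i : ℕ) < j then gstep (w i) else 0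

/-- `gesselF m n1 n2` : number of Gessel walks of length `m` from the origin to `(n1, n2)`
staying in the first quadrant. -/
noncomputable def gesselF (m : ℕ) (n1 n2 : ℤ) : ℕ :=
  Nat.card {w : Fin m → Fin 4 //
    (∀ j, 1 ≤ j → j ≤ m → 0 ≤ (wpos m w j).1 ∧ 0 ≤ (wpos m w j).2) ∧
    wpos m w m = (n1, n2)}

/-- Partial sum of a `±1` sequence. -/
def pSum (m : ℕ) (f : Fin m → ℤ) (j : ℕ) : ℤ :=
  ∑ i : Fin m, if (i : ℕ) < j then f i else 0

lemma wpos_full (m : ℕ) (w : Fin m → Fin 4) : wpos m w m = ∑ i, gstep (w i) := by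
  unfold wpos
  exact Finset.sum_congr rfl fun i _ => if_pos i.isLt

lemma wpos_init (m : ℕ) (w : Fin (m+1) → Fin 4) (j : ℕ) (hj : j ≤ m) :
    wpos (m+1) w j = wpos m (Fin.init w) j := by
  unfold wpos
  rw [Fin.sum_univ_castSucc]
  simp only [Fin.coe_castSucc, Fin.val_last]
  rw [if_neg (by omega)]
  simp [Fin.init]

lemma wpos_last (m : ℕ) (w : Fin (m+1) → Fin 4) :
    wpos (m+1) w (m+1) = wpos m (Fin.init w) m + gstep (w (Fin.last m)) := by
  rw [wpos_full, wpos_full, Fin.sum_univ_castSucc]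
  rfl

lemma gstep_fst_le (s : Fin 4) : (gstep s).1 ≤ 1 := by fin_cases s <;> decide

lemma gstep_ineq (s : Fin 4) : 2 * (gstep s).2 ≤ 1 + (gstep s).1 := by fin_cases s <;> decide

lemma endpoint_fst_le (m : ℕ) (w : Fin m → Fin 4) : (wpos m w m).1 ≤ m := by
  rw [wpos_full, Prod.fst_sum]
  calc ∑ i : Fin m, (gstep (w i)).1 ≤ ∑ _i : Fin m, (1:ℤ) :=
        Finset.sum_le_sum fun i _ => gstep_fst_le (w i)
    _ = m := by simp

lemma endpoint_ineq (m : ℕ) (w : Fin m → Fin 4) :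
    2 * (wpos m w m).2 ≤ m + (wpos m w m).1 := by
  rw [wpos_full, Prod.fst_sum, Prod.snd_sum, Finset.mul_sum]
  calc ∑ i : Fin m, 2 * (gstep (w i)).2 ≤ ∑ i : Fin m, (1 + (gstep (w i)).1) :=
        Finset.sum_le_sum fun i _ => gstep_ineq (w i)
    _ = m + ∑ i : Fin m, (gstep (w i)).1 := by rw [Finset.sum_add_distrib]; simp

lemma gesselF_zero {m : ℕ} {i j : ℤ}
    (h : i < 0 ∨ j < 0 ∨ (m:ℤ) < i ∨ (m:ℤ) + i < 2*j) : gesselF m i j = 0 := by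
  rw [gesselF, Nat.card_eq_zero]
  left
  rw [isEmpty_subtype]
  rintro w ⟨hq, he⟩
  have h1 := endpoint_fst_le m w
  have h2 := endpoint_ineq m w
  rw [he] at h1 h2
  have hij : 0 ≤ i ∧ 0 ≤ j := by
    cases m with
    | zero =>
        have h0 : wpos 0 w 0 = 0 := by simp [wpos]
        rw [h0] at he
        have h1' : i = 0 := congrArg Prod.fst he.symm
        have h2' : j = 0 := congrArg Prod.snd he.symm
        omega
    | succ m' =>
        have := hq (m'+1) (by omega) le_rfl
        rw [he] at this
        exact this
  obtain ⟨hi, hj⟩ := hij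
  simp only at h1 h2
  omega

lemma gesselF_rec (m : ℕ) (i j : ℤ) (hi : 0 ≤ i) (hj : 0 ≤ j) :
    gesselF (m+1) i j =
      gesselF m (i+1) j + gesselF m (i-1) j + gesselF m (i-1) (j-1) + gesselF m (i+1) (j+1) := by
  classical
  have E : {w : Fin (m+1) → Fin 4 //
      (∀ jj, 1 ≤ jj → jj ≤ m+1 → 0 ≤ (wpos (m+1) w jj).1 ∧ 0 ≤ (wpos (m+1) w jj).2) ∧
      wpos (m+1) w (m+1) = (i, j)} ≃
      Σ s : Fin 4, {w' : Fin m → Fin 4 //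
      (∀ jj, 1 ≤ jj → jj ≤ m → 0 ≤ (wpos m w' jj).1 ∧ 0 ≤ (wpos m w' jj).2) ∧
      wpos m w' m = (i, j) - gstep s} := by
    refine ⟨fun ⟨w, hw⟩ => ⟨w (Fin.last m), ⟨Fin.init w, ?_, ?_⟩⟩,
            fun ⟨s, ⟨w', hw'⟩⟩ => ⟨Fin.snoc w' s, ?_, ?_⟩, ?_, ?_⟩
    · intro jj h1 h2
      rw [← wpos_init m w jj h2]
      exact hw.1 jj h1 (by omega)
    · rw [eq_sub_iff_add_eq, ← wpos_last m w, hw.2]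
    · intro jj h1 h2
      rcases Nat.lt_or_ge jj (m+1) with h | h
      · rw [wpos_init m _ jj (by omega), Fin.init_snoc]
        exact hw'.1 jj h1 (by omega)
      · have hjj : jj = m+1 := by omega
        subst hjj
        rw [wpos_last m, Fin.init_snoc, Fin.snoc_last, hw'.2, sub_add_cancel]
        exact ⟨hi, hj⟩
    · rw [wpos_last m, Fin.init_snoc, Fin.snoc_last, hw'.2, sub_add_cancel]
    · rintro ⟨w, hw⟩
      simp [Fin.snoc_init_self]
    · rintro ⟨s, ⟨w', hw'⟩⟩
      have h1 : (Fin.snoc w' s : Fin (m+1) → Fin 4) (Fin.last m) = s := Fin.snoc_last _ _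
      refine Sigma.ext h1 ?_
      refine (Subtype.heq_iff_coe_eq ?_).mpr ?_
      · intro x; simp only [Fin.snoc_last]
      · simp [Fin.init_snoc]
  have hcard : gesselF (m+1) i j = ∑ s : Fin 4,
      gesselF m (i - (gstep s).1) (j - (gstep s).2) := by
    rw [gesselF, Nat.card_congr E, Nat.card_eq_fintype_card, Fintype.card_sigma]
    apply Finset.sum_congr rfl
    intro s _
    rw [gesselF, Nat.card_eq_fintype_card]
    exact Fintype.card_congr (Equiv.subtypeEquivRight (fun w' => by
      rw [Prod.mk_sub_mk (G := ℤ) (H := ℤ) i (gstep s).1 j (gstep s).2]))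
  rw [hcard, Fin.sum_univ_four]
  have e0 : gstep 0 = (-1, 0) := rfl
  have e1 : gstep 1 = (1, 0) := rfl
  have e2 : gstep 2 = (1, 1) := rfl
  have e3 : gstep 3 = (-1, -1) := rfl
  rw [e0, e1, e2, e3]
  norm_num

def ch (a b : ℕ) : ℤ := (a.choose b : ℤ)
def phi0 (m j : ℕ) : ℤ := ch m j - ch m (j+1)
def phi1 (m j : ℕ) : ℤ := (m:ℤ) * (ch m (j+1) - ch m (j+2))
def phi2 (m j : ℕ) : ℤ :=
  ch m (j+2) + ch m 2 * (ch m (j+2) - ch m (j+3)) - ch (m-2) j - 3 * ch (m-2) (j+1)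

lemma pas (a b : ℕ) : ch (a+1) (b+1) = ch a b + ch a (b+1) := by
  unfold ch; exact_mod_cast Nat.choose_succ_succ a b

lemma pas_gen (a b c d : ℕ) (ha : a = c+1) (hb : b = d+1) : ch a b = ch c d + ch c b := by
  subst ha; subst hb; exact pas c d

lemma ch_one (a : ℕ) : ch a 1 = a := by simp [ch]

lemma pas2_gen (a c : ℕ) (ha : a = c+1) : ch a 2 = (c:ℤ) + ch c 2 := by
  subst ha
  have h := pas c 1
  norm_num at h
  rw [h, ch_one]

lemma sym_gen (n a b : ℕ) (h : n = a + b) : ch n a = ch n b := by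
  unfold ch; exact_mod_cast Nat.choose_symm_of_eq_add h

lemma L_I0a (m k : ℕ) : phi0 (m+1) (k+1) = phi0 m (k+1) + phi0 m k := by
  simp only [phi0]
  rw [pas_gen (m+1) (k+1) m k (by ring) (by ring),
      pas_gen (m+1) (k+1+1) m (k+1) (by ring) (by ring)]
  ring

lemma L_I0b (m k : ℕ) (hm : m = 2*k+1) : phi0 (m+1) (k+1) = phi0 m (k+1) := by
  subst hm
  simp only [phi0]
  rw [pas_gen (2*k+1+1) (k+1) (2*k+1) k (by ring) (by ring),
      pas_gen (2*k+1+1) (k+1+1) (2*k+1) (k+1) (by ring) (by ring),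
      sym_gen (2*k+1) k (k+1) (by ring)]
  ring

lemma L_I1a (m k : ℕ) : phi1 (m+1) (k+1) = phi1 m (k+1) + phi0 m (k+1) + phi1 m k + phi0 m (k+2) := by
  simp only [phi1, phi0]
  rw [pas_gen (m+1) (k+1+1) m (k+1) (by ring) (by ring),
      pas_gen (m+1) (k+1+2) m (k+1+1) (by ring) (by ring)]
  push_cast
  ring_nf

lemma L_I1b (m j : ℕ) (hm : m = 2*j+1) : phi1 (m+1) j = phi1 m j + phi0 m (j+1) := by
  subst hm
  simp only [phi1, phi0]
  rw [pas_gen (2*j+1+1) (j+1) (2*j+1) j (by ring) (by ring),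
      pas_gen (2*j+1+1) (j+2) (2*j+1) (j+1) (by ring) (by ring),
      sym_gen (2*j+1) j (j+1) (by ring)]
  push_cast
  ring_nf

lemma L_I1c (m : ℕ) (hm : m = 0) : phi1 (m+1) 0 = phi1 m 0 + phi0 m 0 + phi0 m 1 := by
  subst hm; decide

lemma L_I2m1 (m j : ℕ) (hm : m = 1) : phi2 (m+1) j = phi1 m j + phi1 m (j+1) := by
  subst hm
  cases j with
  | zero => decide
  | succ k =>
    have z : ∀ a b : ℕ, a < b → ch a b = 0 := fun a b h => by
      simp [ch, Nat.choose_eq_zero_of_lt h]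
    simp only [phi2, phi1]
    rw [z 2 (k+1+2) (by omega), z 2 (k+1+3) (by omega),
        z (2-2) (k+1) (by omega), z (2-2) (k+1+1) (by omega),
        z 1 (k+1+1) (by omega), z 1 (k+1+2) (by omega),
        z 1 (k+1+1+2) (by omega)]
    ring

lemma L_I2c (m : ℕ) (hm : m = 2) : phi2 (m+1) 0 = phi2 m 0 + phi1 m 0 + phi1 m 1 := by
  subst hm; decide

lemma L_I2d (m : ℕ) (hm : m = 3) : phi2 (m+1) 0 = phi2 m 0 + phi1 m 1 := by
  subst hm; decide

lemma L_I2a (m k : ℕ) (hm : 2 ≤ m) :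
    phi2 (m+1) (k+1) = phi2 m (k+1) + phi1 m (k+1) + phi2 m k + phi1 m (k+2) := by
  obtain ⟨M, rfl⟩ : ∃ M, m = M+2 := ⟨m-2, by omega⟩
  simp only [phi2, phi1]
  rw [show M+2+1-2 = M+1 by omega, show M+2-2 = M by omega]
  rw [pas_gen (M+2+1) (k+1+2) (M+2) (k+1+1) (by ring) (by ring),
      pas_gen (M+2+1) (k+1+3) (M+2) (k+1+2) (by ring) (by ring),
      pas2_gen (M+2+1) (M+2) (by ring),
      pas_gen (M+2) (k+1+1) (M+1) (k+1) (by ring) (by ring),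
      pas_gen (M+2) (k+1+2) (M+1) (k+1+1) (by ring) (by ring),
      pas_gen (M+2) (k+1+3) (M+1) (k+1+2) (by ring) (by ring),
      pas2_gen (M+2) (M+1) (by ring),
      pas_gen (M+1) (k+1) M k (by ring) (by ring),
      pas_gen (M+1) (k+1+1) M (k+1) (by ring) (by ring),
      pas_gen (M+1) (k+1+2) M (k+1+1) (by ring) (by ring),
      pas_gen (M+1) (k+1+3) M (k+1+2) (by ring) (by ring),
      pas2_gen (M+1) M (by ring)]
  push_cast
  ring_nf

lemma L_I2b (m k : ℕ) (hm : m = 2*k+5) : phi2 (m+1) (k+1) = phi2 m (k+1) + phi1 m (k+2) := by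
  subst hm
  simp only [phi2, phi1]
  rw [show 2*k+5+1-2 = 2*k+4 by omega, show 2*k+5-2 = 2*k+3 by omega]
  rw [pas_gen (2*k+5+1) (k+1+2) (2*k+5) (k+1+1) (by ring) (by ring),
      pas_gen (2*k+5+1) (k+1+3) (2*k+5) (k+1+2) (by ring) (by ring),
      pas2_gen (2*k+5+1) (2*k+5) (by ring),
      pas_gen (2*k+5) (k+1+1) (2*k+4) (k+1) (by ring) (by ring),
      pas_gen (2*k+5) (k+1+2) (2*k+4) (k+1+1) (by ring) (by ring),
      pas_gen (2*k+5) (k+1+3) (2*k+4) (k+1+2) (by ring) (by ring),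
      pas2_gen (2*k+5) (2*k+4) (by ring),
      pas_gen (2*k+4) (k+1) (2*k+3) k (by ring) (by ring),
      pas_gen (2*k+4) (k+1+1) (2*k+3) (k+1) (by ring) (by ring),
      pas_gen (2*k+4) (k+1+2) (2*k+3) (k+1+1) (by ring) (by ring),
      pas_gen (2*k+4) (k+1+3) (2*k+3) (k+1+2) (by ring) (by ring),
      pas2_gen (2*k+4) (2*k+3) (by ring)]
  rw [sym_gen (2*k+3) (k+1) (k+2) (by ring), sym_gen (2*k+3) k (k+3) (by ring)]
  push_cast
  ring_nf

lemma g000 : gesselF 0 0 0 = 1 := by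
  rw [gesselF, Nat.card_eq_one_iff_unique]
  constructor
  · constructor
    intro a b
    apply Subtype.ext
    funext i
    exact i.elim0
  · refine ⟨⟨fun i => i.elim0, fun jj h1 h2 => by omega, ?_⟩⟩
    simp [wpos]
    rfl

lemma chz (a b : ℕ) (h : a < b) : ch a b = 0 := by
  simp [ch, Nat.choose_eq_zero_of_lt h]

lemma key (m : ℕ) : ∀ j : ℕ,
    (∀ i : ℤ, i = 2*(j:ℤ) - m → 0 ≤ i → (gesselF m i j : ℤ) = phi0 m j) ∧
    (∀ i : ℤ, i = 2*(j:ℤ) + 2 - m → 0 ≤ i → (gesselF m i j : ℤ) = phi1 m j) ∧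
    (∀ i : ℤ, i = 2*(j:ℤ) + 4 - m → 0 ≤ i → 2 ≤ m → (gesselF m i j : ℤ) = phi2 m j) := by
  induction m with
  | zero =>
    intro j
    refine ⟨?_, ?_, ?_⟩
    · intro i hi hi0
      cases j with
      | zero =>
        have : i = 0 := by omega
        subst this
        rw [show ((0:ℕ):ℤ) = 0 from rfl, g000]
        decide
      | succ k =>
        rw [gesselF_zero (by omega)]
        rw [phi0, chz 0 (k+1) (by omega), chz 0 (k+1+1) (by omega)]
        simp
    · intro i hi hi0
      rw [gesselF_zero (by omega)]
      simp [phi1]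
    · intro i hi hi0 h2
      omega
  | succ m ih =>
    intro j
    refine ⟨?_, ?_, ?_⟩
    · -- claim A
      intro i hi hi0
      obtain ⟨k, rfl⟩ : ∃ k, j = k+1 := ⟨j-1, by omega⟩
      rw [gesselF_rec m i _ hi0 (by positivity)]
      push_cast [Nat.cast_add]
      rw [show ((k:ℤ)+1) - 1 = (k:ℤ) by ring]
      have t2 : gesselF m (i-1) ((k:ℤ)+1) = 0 := gesselF_zero (by omega)
      have t4 : gesselF m (i+1) ((k:ℤ)+1+1) = 0 := gesselF_zero (by omega)
      have t1 : (gesselF m (i+1) ((k:ℤ)+1) : ℤ) = phi0 m (k+1) := by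
        have := (ih (k+1)).1 (i+1) (by push_cast; omega) (by omega)
        push_cast at this ⊢
        exact this
      rcases eq_or_lt_of_le hi0 with h0 | h0
      · -- i = 0
        have t3 : gesselF m (i-1) ((k:ℤ)) = 0 := gesselF_zero (by omega)
        rw [t1, t2, t3, t4]
        have hm : m = 2*k+1 := by omega
        push_cast
        linear_combination (L_I0b m k hm).symm
      · -- i ≥ 1
        have t3 : (gesselF m (i-1) ((k:ℤ)) : ℤ) = phi0 m k := by
          have := (ih k).1 (i-1) (by push_cast; omega) (by omega)
          push_cast at this ⊢
          exact this
        rw [t1, t2, t3, t4]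
        push_cast
        linear_combination (L_I0a m k).symm
    · -- claim B
      intro i hi hi0
      rw [gesselF_rec m i _ hi0 (by positivity)]
      push_cast
      have t1 : (gesselF m (i+1) ((j:ℤ)) : ℤ) = phi1 m j := by
        have := (ih j).2.1 (i+1) (by omega) (by omega)
        push_cast at this ⊢; exact this
      have t4 : (gesselF m (i+1) ((j:ℤ)+1) : ℤ) = phi0 m (j+1) := by
        have := (ih (j+1)).1 (i+1) (by push_cast; omega) (by omega)
        push_cast at this ⊢; exact this
      rcases eq_or_lt_of_le hi0 with h0 | h0
      · -- i = 0
        have t2 : gesselF m (i-1) ((j:ℤ)) = 0 := gesselF_zero (by omega)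
        have t3 : gesselF m (i-1) ((j:ℤ)-1) = 0 := gesselF_zero (by omega)
        rw [t1, t2, t3, t4]
        have hm : m = 2*j+1 := by omega
        push_cast
        linear_combination (L_I1b m j hm).symm
      · cases j with
        | zero =>
          have t3 : gesselF m (i-1) (((0:ℕ):ℤ)-1) = 0 := gesselF_zero (by omega)
          have t2 : (gesselF m (i-1) (((0:ℕ)):ℤ) : ℤ) = phi0 m 0 := by
            have := (ih 0).1 (i-1) (by push_cast; omega) (by omega)
            push_cast at this ⊢; exact this
          rw [t1, t2, t3, t4]
          have hm : m = 0 := by omega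
          push_cast
          linear_combination (L_I1c m hm).symm
        | succ k =>
          rw [show ((k+1:ℕ):ℤ) - 1 = (k:ℤ) by push_cast; ring]
          have t2 : (gesselF m (i-1) ((k+1:ℕ):ℤ) : ℤ) = phi0 m (k+1) := by
            have := (ih (k+1)).1 (i-1) (by push_cast; omega) (by omega)
            push_cast at this ⊢; exact this
          have t3 : (gesselF m (i-1) ((k:ℤ)) : ℤ) = phi1 m k := by
            have := (ih k).2.1 (i-1) (by push_cast; omega) (by omega)
            push_cast at this ⊢; exact this
          rw [t2, t3]
          push_cast at t1 t4 ⊢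
          rw [t1, t4]
          linear_combination (L_I1a m k).symm
    · -- claim C
      intro i hi hi0 h2
      rw [gesselF_rec m i _ hi0 (by positivity)]
      push_cast
      have t4 : (gesselF m (i+1) ((j:ℤ)+1) : ℤ) = phi1 m (j+1) := by
        have := (ih (j+1)).2.1 (i+1) (by push_cast; omega) (by omega)
        push_cast at this ⊢; exact this
      rcases Nat.lt_or_ge m 2 with hm1 | hm2
      · -- m = 1 (m=0 impossible since 2 ≤ m+1 gives m ≥ 1)
        have hm : m = 1 := by omega
        have t1 : gesselF m (i+1) ((j:ℤ)) = 0 := gesselF_zero (by omega)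
        have t3 : gesselF m (i-1) ((j:ℤ)-1) = 0 := gesselF_zero (by omega)
        have t2 : (gesselF m (i-1) ((j:ℤ)) : ℤ) = phi1 m j := by
          have := (ih j).2.1 (i-1) (by omega) (by omega)
          push_cast at this ⊢; exact this
        rw [t1, t2, t3, t4]
        push_cast
        linear_combination (L_I2m1 m j hm).symm
      · cases j with
        | zero =>
          -- i = 3 - m ≥ 0, m ∈ {2,3}
          have t3 : gesselF m (i-1) (((0:ℕ):ℤ)-1) = 0 := gesselF_zero (by omega)
          have t1 : (gesselF m (i+1) (((0:ℕ)):ℤ) : ℤ) = phi2 m 0 := by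
            have := (ih 0).2.2 (i+1) (by push_cast; omega) (by omega) hm2
            push_cast at this ⊢; exact this
          rcases eq_or_lt_of_le hi0 with h0 | h0
          · -- i = 0, m = 3
            have hm : m = 3 := by omega
            have t2 : gesselF m (i-1) (((0:ℕ)):ℤ) = 0 := gesselF_zero (by omega)
            rw [t1, t2, t3, t4]
            push_cast
            linear_combination (L_I2d m hm).symm
          · -- i ≥ 1, m = 2
            have hm : m = 2 := by omega
            have t2 : (gesselF m (i-1) (((0:ℕ)):ℤ) : ℤ) = phi1 m 0 := by
              have := (ih 0).2.1 (i-1) (by push_cast; omega) (by omega)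
              push_cast at this ⊢; exact this
            rw [t1, t2, t3, t4]
            push_cast
            linear_combination (L_I2c m hm).symm
        | succ k =>
          rw [show ((k+1:ℕ):ℤ) - 1 = (k:ℤ) by push_cast; ring]
          have t1 : (gesselF m (i+1) ((k+1:ℕ):ℤ) : ℤ) = phi2 m (k+1) := by
            have := (ih (k+1)).2.2 (i+1) (by push_cast; omega) (by omega) hm2
            push_cast at this ⊢; exact this
          rcases eq_or_lt_of_le hi0 with h0 | h0
          · -- i = 0, m = 2k+5
            have hm : m = 2*k+5 := by omega
            have t2 : gesselF m (i-1) ((k+1:ℕ):ℤ) = 0 := gesselF_zero (by omega)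
            have t3 : gesselF m (i-1) ((k:ℤ)) = 0 := gesselF_zero (by omega)
            rw [t2, t3]
            push_cast at t1 t4 ⊢
            rw [t1, t4]
            linear_combination (L_I2b m k hm).symm
          · -- i ≥ 1
            have t2 : (gesselF m (i-1) ((k+1:ℕ):ℤ) : ℤ) = phi1 m (k+1) := by
              have := (ih (k+1)).2.1 (i-1) (by push_cast; omega) (by omega)
              push_cast at this ⊢; exact this
            have t3 : (gesselF m (i-1) ((k:ℤ)) : ℤ) = phi2 m k := by
              have := (ih k).2.2 (i-1) (by push_cast; omega) (by omega) hm2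
              push_cast at this ⊢; exact this
            rw [t3]
            push_cast at t1 t2 t4 ⊢
            rw [t1, t2, t4]
            linear_combination (L_I2a m k hm2).symm

lemma final (n : ℕ) :
    (n.factorial : ℤ) * (n+3).factorial * phi2 (2*n+4) n
      = (2*n+2).factorial * (8*(n:ℤ)^2+32*n+33) := by
  have e1 := Nat.choose_mul_factorial_mul_factorial (show n+2 ≤ 2*n+4 by omega)
  rw [show 2*n+4-(n+2) = n+2 by omega] at e1
  have e2 := Nat.choose_mul_factorial_mul_factorial (show n+3 ≤ 2*n+4 by omega)
  rw [show 2*n+4-(n+3) = n+1 by omega] at e2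
  have e3 := Nat.choose_mul_factorial_mul_factorial (show n ≤ 2*n+2 by omega)
  rw [show 2*n+2-n = n+2 by omega] at e3
  have e4 := Nat.choose_mul_factorial_mul_factorial (show n+1 ≤ 2*n+2 by omega)
  rw [show 2*n+2-(n+1) = n+1 by omega] at e4
  have e5 := Nat.choose_mul_factorial_mul_factorial (show 2 ≤ 2*n+4 by omega)
  rw [show 2*n+4-2 = 2*n+2 by omega] at e5
  have hne : ∀ a : ℕ, ((a.factorial : ℚ)) ≠ 0 :=
    fun a => Nat.cast_ne_zero.mpr (Nat.factorial_ne_zero a)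
  have c1 : ((2*n+4).choose (n+2) : ℚ) =
      (2*n+4).factorial / ((n+2).factorial * (n+2).factorial) := by
    rw [eq_div_iff (mul_ne_zero (hne _) (hne _))]
    push_cast [← e1]; ring
  have c2 : ((2*n+4).choose (n+3) : ℚ) =
      (2*n+4).factorial / ((n+3).factorial * (n+1).factorial) := by
    rw [eq_div_iff (mul_ne_zero (hne _) (hne _))]
    push_cast [← e2]; ring
  have c3 : ((2*n+2).choose n : ℚ) =
      (2*n+2).factorial / (n.factorial * (n+2).factorial) := by
    rw [eq_div_iff (mul_ne_zero (hne _) (hne _))]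
    push_cast [← e3]; ring
  have c4 : ((2*n+2).choose (n+1) : ℚ) =
      (2*n+2).factorial / ((n+1).factorial * (n+1).factorial) := by
    rw [eq_div_iff (mul_ne_zero (hne _) (hne _))]
    push_cast [← e4]; ring
  have c5 : ((2*n+4).choose 2 : ℚ) =
      (2*n+4).factorial / (2 * (2*n+2).factorial) := by
    rw [eq_div_iff (by exact mul_ne_zero two_ne_zero (hne _))]
    have : ((2:ℕ).factorial : ℚ) = 2 := by norm_num [Nat.factorial]
    push_cast [← e5]
    norm_num [Nat.factorial]
    ring
  have f1 : ((n+1).factorial : ℚ) = (n+1) * n.factorial := by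
    exact_mod_cast Nat.factorial_succ n
  have f2 : ((n+2).factorial : ℚ) = (n+2) * (n+1).factorial := by
    rw [show n+2 = (n+1)+1 by ring]; push_cast [Nat.factorial_succ (n+1)]; ring
  have f3 : ((n+3).factorial : ℚ) = (n+3) * (n+2).factorial := by
    rw [show n+3 = (n+2)+1 by ring]; push_cast [Nat.factorial_succ (n+2)]; ring
  have g1 : ((2*n+3).factorial : ℚ) = (2*n+3) * (2*n+2).factorial := by
    rw [show 2*n+3 = (2*n+2)+1 by ring]; push_cast [Nat.factorial_succ (2*n+2)]; ring
  have g2 : ((2*n+4).factorial : ℚ) = (2*n+4) * (2*n+3).factorial := by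
    rw [show 2*n+4 = (2*n+3)+1 by ring]; push_cast [Nat.factorial_succ (2*n+3)]; ring
  have cast_inj : ∀ x y : ℤ, (x:ℚ) = y → x = y := fun x y h => by exact_mod_cast h
  apply cast_inj
  push_cast [phi2, ch]
  rw [c1, c2, c3, c4, c5, g2, g1, f3, f2, f1]
  have hn1 : ((n:ℚ)+1) ≠ 0 := by positivity
  have hn2 : ((n:ℚ)+2) ≠ 0 := by positivity
  have hn3 : ((n:ℚ)+3) ≠ 0 := by positivity
  field_simp
  ring

theorem gessel_C2_k2 (n : ℕ) :
    n.factorial * (n + 3).factorial * gesselF (2 * n + 4) 0 (n : ℤ) =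
      (2 * n + 2).factorial * (8 * n ^ 2 + 32 * n + 33) := by
  have hk := (key (2*n+4) n).2.2 0 (by push_cast; ring) le_rfl (by omega)
  zify
  rw [hk]
  linear_combination final n
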